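/- arXiv:1610.04708 — 2 statements merged into one kernel-verified Lean document; each statement's English description precedes it below -/
import Mathlib

section
/- If H is a contraction of a connected weighted graph G, both with more than one vertex and H connected, then the spectral gaps satisfy λ(G) ≤ λ(H). -/
/-! Pulling a test function `f` on `H` back along the contraction map to `f ∘ c` on `G`
preserves both the orthogonality constraint and the Rayleigh quotient, because every weighted
sum over pairs of vertices of `H` is the corresponding sum over pairs of their preimages in `G`.
So the Rayleigh quotients of `H` form a subset of those of `G`, and the infimum over the larger
set is smaller. -/

open Finset

def IsContraction {R V' V : Type*} [AddCommMonoid R] [Fintype V'] [DecidableEq V]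
    (w' : V' → V' → R) (w : V → V → R) (c : V' → V) : Prop :=
  ∀ x y, w x y = ∑ a, ∑ b, if c a = x ∧ c b = y then w' a b else 0

section Contraction

variable {R V' V : Type*} [NonUnitalNonAssocSemiring R] [Fintype V'] [Fintype V] [DecidableEq V]
  {w' : V' → V' → R} {w : V → V → R} {c : V' → V}

theorem sum_sum_mul_contraction (hw : IsContraction w' w c) (φ : V → V → R) :
    ∑ x, ∑ y, φ x y * w x y = ∑ a, ∑ b, φ (c a) (c b) * w' a b := by
  simp_rw [hw _ _, mul_sum, mul_ite, mul_zero, sum_comm (γ := V) (α := V')]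
  simp [ite_and]

theorem sum_mul_degree_contraction (hw : IsContraction w' w c) (g : V → R) :
    ∑ x, g x * ∑ y, w x y = ∑ a, g (c a) * ∑ b, w' a b := by
  simpa only [mul_sum] using sum_sum_mul_contraction hw fun x _ => g x

end Contraction

section RayleighQuotient

variable {V : Type*} [Fintype V]

noncomputable def rayleighQuotient (w : V → V → ℝ) (f : V → ℝ) : ℝ :=
  ((1 / 2) * ∑ a, ∑ b, (f a - f b) ^ 2 * w a b) / ∑ a, f a ^ 2 * ∑ b, w a b

def rayleighQuotients (w : V → V → ℝ) : Set ℝ :=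
  {R | ∃ f : V → ℝ, f ≠ 0 ∧ ∑ a, f a * ∑ b, w a b = 0 ∧ R = rayleighQuotient w f}

variable {V' : Type*} [Fintype V'] [DecidableEq V] {w' : V' → V' → ℝ} {w : V → V → ℝ}
  {c : V' → V}

theorem rayleighQuotient_comp_contraction (hw : IsContraction w' w c) (f : V → ℝ) :
    rayleighQuotient w' (f ∘ c) = rayleighQuotient w f := by
  simp only [rayleighQuotient, Function.comp_apply, sum_sum_mul_contraction hw,
    sum_mul_degree_contraction hw]

theorem rayleighQuotients_subset_of_contraction (hc : Function.Surjective c)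
    (hw : IsContraction w' w c) :
    rayleighQuotients w ⊆ rayleighQuotients w' := by
  rintro _ ⟨f, hf, horth, rfl⟩
  refine ⟨f ∘ c, ?_, ?_, (rayleighQuotient_comp_contraction hw f).symm⟩
  · exact fun hfc => hf (hc.injective_comp_right (hfc.trans (Pi.zero_comp c).symm))
  · simpa only [Function.comp_apply, ← sum_mul_degree_contraction hw] using horth

end RayleighQuotient

theorem contraction_spectral_gap_general {V' V : Type*} [Fintype V'] [Fintype V] [DecidableEq V]
    (w' : V' → V' → ℝ) (w : V → V → ℝ)
    (c : V' → V) (hc : Function.Surjective c)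
    (hw : ∀ x y, w x y = ∑ a, ∑ b, if c a = x ∧ c b = y then w' a b else 0)
    (lamG lamH : ℝ)
    (hlamG : IsGLB {R : ℝ | ∃ f : V' → ℝ, f ≠ 0 ∧
        (∑ a, f a * (∑ b, w' a b)) = 0 ∧
        R = ((1 / 2) * ∑ a, ∑ b, (f a - f b) ^ 2 * w' a b) /
          (∑ a, (f a) ^ 2 * (∑ b, w' a b))} lamG)
    (hlamH : IsGLB {R : ℝ | ∃ f : V → ℝ, f ≠ 0 ∧
        (∑ x, f x * (∑ y, w x y)) = 0 ∧
        R = ((1 / 2) * ∑ x, ∑ y, (f x - f y) ^ 2 * w x y) /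
          (∑ x, (f x) ^ 2 * (∑ y, w x y))} lamH) :
    lamG ≤ lamH :=
  hlamH.mono hlamG (rayleighQuotients_subset_of_contraction hc hw)

theorem contraction_spectral_gap {V' V : Type*} [Fintype V'] [Fintype V] [DecidableEq V]
    (w' : V' → V' → ℝ) (w : V → V → ℝ)
    (hsymm' : ∀ a b, w' a b = w' b a) (hnn' : ∀ a b, 0 ≤ w' a b)
    (hsymm : ∀ x y, w x y = w y x)
    (hconn' : ∀ a b : V', Relation.ReflTransGen (fun p q => 0 < w' p q) a b)
    (hconn : ∀ x y : V, Relation.ReflTransGen (fun p q => 0 < w p q) x y)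
    (hV' : 1 < Fintype.card V') (hV : 1 < Fintype.card V)
    (c : V' → V) (hc : Function.Surjective c)
    (hw : ∀ x y, w x y = ∑ a, ∑ b, if c a = x ∧ c b = y then w' a b else 0)
    (lamG lamH : ℝ)
    (hlamG : IsGLB {R : ℝ | ∃ f : V' → ℝ, f ≠ 0 ∧
        (∑ a, f a * (∑ b, w' a b)) = 0 ∧
        R = ((1 / 2) * ∑ a, ∑ b, (f a - f b) ^ 2 * w' a b) /
          (∑ a, (f a) ^ 2 * (∑ b, w' a b))} lamG)
    (hlamH : IsGLB {R : ℝ | ∃ f : V → ℝ, f ≠ 0 ∧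
        (∑ x, f x * (∑ y, w x y)) = 0 ∧
        R = ((1 / 2) * ∑ x, ∑ y, (f x - f y) ^ 2 * w x y) /
          (∑ x, (f x) ^ 2 * (∑ y, w x y))} lamH) :
    lamG ≤ lamH :=
  contraction_spectral_gap_general w' w c hc hw lamG lamH hlamG hlamH
end

section
/- Let H_1 and H_2 be Hermitian positive semidefinite matrices with null-spaces N_1 and N_2, lowest nonzero eigenvalues λ_1 and λ_2, μ = min(λ_1, λ_2), and suppose N_1 ∩ N_2 ⊊ N_2. Let θ be the angle between N_1 and N_2 ∖ N_1 (i.e., cos θ is the maximal overlap |⟨n_1|n_2⟩| over unit vectors n_1 ∈ N_1 and unit vectors n_2 ∈ N_2 orthogonal to N_1 ∩ N_2). Then the smallest nonzero eigenvalue λ(H_1 + H_2) of H_1 + H_2 satisfies μ·sin²(θ/2) ≤ λ(H_1 + H_2) ≤ ‖H_1‖·sin²(θ). -/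
/-!
On `(ker H)ᗮ` the quadratic form of a positive `H` is at least `λ(H) ‖x‖²`, and `⟪x, H x⟫` only
sees the component of `x` in `(ker H)ᗮ`. Let `Pᵢ` be the orthogonal projection onto `Nᵢ`.

Lower bound: a unit eigenvector `f` of `H₁ + H₂` with nonzero eigenvalue is orthogonal to
`N₁ ∩ N₂`, hence so is `P₂ f`, and the angle hypothesis bounds `re ⟪P₁ f, P₂ f⟫` by
`cos θ ‖P₁ f‖ ‖P₂ f‖`. Cauchy–Schwarz for `⟪f, P₁ f + P₂ f⟫ = ‖P₁ f‖² + ‖P₂ f‖²` then gives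
`‖P₁ f‖² + ‖P₂ f‖² ≤ 1 + cos θ`, so
`λ(H₁ + H₂) ≥ μ (‖f - P₁ f‖² + ‖f - P₂ f‖²) ≥ μ (1 - cos θ) = 2 μ sin² (θ / 2)`.

Upper bound: test `H₁ + H₂` on a unit `v ∈ N₂ ⊖ (N₁ ∩ N₂)` realising `cos θ = |⟪u, v⟫|`.
Positivity gives `ker (H₁ + H₂) = N₁ ∩ N₂`, so `λ(H₁ + H₂) ≤ ⟪v, H₁ v⟫ ≤ ‖H₁‖ ‖v - P₁ v‖²`, and
`‖P₁ v‖ ≥ |⟪u, v⟫| = cos θ`.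
-/

open scoped InnerProductSpace ComplexOrder
open RCLike Module.End

variable {𝕜 E : Type*} [RCLike 𝕜] [NormedAddCommGroup E] [InnerProductSpace 𝕜 E]

def nonzeroRealEigenvalues (T : E →ₗ[𝕜] E) : Set ℝ :=
  {μ | μ ≠ 0 ∧ ∃ f : E, f ≠ 0 ∧ T f = (μ : 𝕜) • f}

section Angle

variable {K L : Submodule 𝕜 E}

theorem norm_inner_le_mul_of_norm_eq_one {c : ℝ}
    (h : ∀ u ∈ K, ∀ v ∈ L, ‖u‖ = 1 → ‖v‖ = 1 → ‖⟪u, v⟫_𝕜‖ ≤ c) {u v : E} (hu : u ∈ K)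
    (hv : v ∈ L) : ‖⟪u, v⟫_𝕜‖ ≤ c * ‖u‖ * ‖v‖ := by
  rcases eq_or_ne u 0 with rfl | hu0
  · simp
  rcases eq_or_ne v 0 with rfl | hv0
  · simp
  have hunit := h _ (K.smul_mem _ hu) _ (L.smul_mem _ hv) (norm_smul_inv_norm hu0)
    (norm_smul_inv_norm (𝕜 := 𝕜) hv0)
  rw [inner_smul_left, inner_smul_right, norm_mul, norm_mul, map_inv₀, conj_ofReal, norm_inv,
    norm_inv, norm_ofReal, norm_ofReal, abs_norm, abs_norm, ← div_eq_inv_mul, ← div_eq_inv_mul,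
    div_div, div_le_iff₀ (by positivity)] at hunit
  linarith

theorem norm_sq_starProjection_add_norm_sq_starProjection_le [K.HasOrthogonalProjection]
    [L.HasOrthogonalProjection] {c : ℝ} (hc : 0 ≤ c)
    (hKL : ∀ u ∈ K, ∀ v ∈ L, v ∈ (K ⊓ L)ᗮ → ‖⟪u, v⟫_𝕜‖ ≤ c * ‖u‖ * ‖v‖)
    {f : E} (hf : f ∈ (K ⊓ L)ᗮ) :
    ‖K.starProjection f‖ ^ 2 + ‖L.starProjection f‖ ^ 2 ≤ (1 + c) * ‖f‖ ^ 2 := by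
  set g := K.starProjection f
  set h := L.starProjection f
  have hh_orth : h ∈ (K ⊓ L)ᗮ := fun w hw => by
    rw [← L.inner_starProjection_left_eq_right, L.starProjection_eq_self_iff.mpr hw.2]
    exact hf w hw
  have hgh : re ⟪g, h⟫_𝕜 ≤ c * ‖g‖ * ‖h‖ :=
    (re_le_norm _).trans (hKL g (K.starProjection_apply_mem f) h (L.starProjection_apply_mem f) hh_orth)
  have hfgh : re ⟪f, g + h⟫_𝕜 = ‖g‖ ^ 2 + ‖h‖ ^ 2 := by
    rw [inner_add_right, map_add, inner_re_symm f g, inner_re_symm f h,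
      K.re_inner_starProjection_eq_normSq, L.re_inner_starProjection_eq_normSq]
    rfl
  have hCS : ‖g‖ ^ 2 + ‖h‖ ^ 2 ≤ ‖f‖ * ‖g + h‖ := hfgh ▸ re_inner_le_norm _ _
  have hgh_sq : ‖g + h‖ ^ 2 ≤ (1 + c) * (‖g‖ ^ 2 + ‖h‖ ^ 2) := by
    rw [norm_add_sq (𝕜 := 𝕜)]
    nlinarith [sq_nonneg (‖g‖ - ‖h‖)]
  have hs : 0 ≤ ‖g‖ ^ 2 + ‖h‖ ^ 2 := by positivity
  have hsq : (‖g‖ ^ 2 + ‖h‖ ^ 2) ^ 2 ≤ (1 + c) * ‖f‖ ^ 2 * (‖g‖ ^ 2 + ‖h‖ ^ 2) :=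
    calc (‖g‖ ^ 2 + ‖h‖ ^ 2) ^ 2 ≤ ‖f‖ ^ 2 * ‖g + h‖ ^ 2 := by
          rw [← mul_pow]; exact pow_le_pow_left₀ hs hCS 2
      _ ≤ ‖f‖ ^ 2 * ((1 + c) * (‖g‖ ^ 2 + ‖h‖ ^ 2)) := by gcongr
      _ = _ := by ring
  by_contra! hlt
  have hA : 0 ≤ (1 + c) * ‖f‖ ^ 2 := by positivity
  nlinarith [mul_lt_mul_of_pos_right hlt (hA.trans_lt hlt)]

end Angle

theorem LinearMap.IsSymmetric.mem_ker_orthogonal_of_apply_eq_smul {T : E →ₗ[𝕜] E}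
    (hT : T.IsSymmetric) {μ : 𝕜} (hμ : μ ≠ 0) {f : E} (hf : T f = μ • f) :
    f ∈ (LinearMap.ker T)ᗮ := by
  intro w hw
  have : μ * ⟪w, f⟫_𝕜 = 0 := by
    rw [← inner_smul_right, ← hf, ← hT, LinearMap.mem_ker.mp hw, inner_zero_left]
  exact (mul_eq_zero.mp this).resolve_left hμ

theorem LinearMap.IsPositive.pos_of_mem_nonzeroRealEigenvalues {T : E →ₗ[𝕜] E}
    (hT : T.IsPositive) {μ : ℝ} (hμ : μ ∈ nonzeroRealEigenvalues T) : 0 < μ := by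
  obtain ⟨hμ0, f, hf0, hf⟩ := hμ
  have : HasEigenvalue T μ := hasEigenvalue_of_hasEigenvector ⟨mem_eigenspace_iff.mpr hf, hf0⟩
  exact (eigenvalue_nonneg_of_nonneg this hT.re_inner_nonneg_right).lt_of_ne' hμ0

section FiniteDimensional

variable [FiniteDimensional 𝕜 E]

namespace LinearMap.IsSymmetric

variable {T : E →ₗ[𝕜] E} (hT : T.IsSymmetric)
include hT

theorem re_inner_map_self_eq_sum_eigenvalues {n : ℕ} (hn : Module.finrank 𝕜 E = n) (x : E) :
    re ⟪x, T x⟫_𝕜 = ∑ i, hT.eigenvalues hn i * ‖(hT.eigenvectorBasis hn).repr x i‖ ^ 2 := by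
  rw [← (hT.eigenvectorBasis hn).repr.inner_map_map, PiLp.inner_apply, map_sum]
  refine Finset.sum_congr rfl fun i _ => ?_
  rw [hT.eigenvectorBasis_apply_self_apply hn, ← smul_eq_mul, inner_smul_right,
    inner_self_eq_norm_sq_to_K]
  norm_cast

theorem mul_norm_sq_le_re_inner_map_self_of_mem_ker_orthogonal {lam : ℝ}
    (hlam : lam ∈ lowerBounds (nonzeroRealEigenvalues T)) {x : E}
    (hx : x ∈ (LinearMap.ker T)ᗮ) : lam * ‖x‖ ^ 2 ≤ re ⟪x, T x⟫_𝕜 := by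
  rw [hT.re_inner_map_self_eq_sum_eigenvalues rfl]
  set b := hT.eigenvectorBasis rfl
  have hcoeff (i) : lam * ‖b.repr x i‖ ^ 2 ≤ hT.eigenvalues rfl i * ‖b.repr x i‖ ^ 2 := by
    by_cases h0 : hT.eigenvalues rfl i = 0
    · have hker : b i ∈ LinearMap.ker T := by simp [b, h0]
      have : b.repr x i = 0 := by rw [b.repr_apply_apply]; exact hx _ hker
      simp [this]
    · exact mul_le_mul_of_nonneg_right
        (hlam ⟨h0, b i, b.orthonormal.ne_zero i, hT.apply_eigenvectorBasis rfl i⟩) (sq_nonneg _)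
  rw [← b.repr.norm_map x, EuclideanSpace.norm_sq_eq, Finset.mul_sum]
  exact Finset.sum_le_sum fun i _ => hcoeff i

theorem inner_map_self_eq_inner_map_starProjection (x : E) :
    ⟪x, T x⟫_𝕜 = ⟪(LinearMap.ker T)ᗮ.starProjection x,
      T ((LinearMap.ker T)ᗮ.starProjection x)⟫_𝕜 := by
  set K := LinearMap.ker T
  have hTy : T (K.starProjection x) = 0 := K.starProjection_apply_mem x
  conv_lhs => rw [← K.starProjection_add_starProjection_orthogonal x]
  rw [map_add, hTy, zero_add, inner_add_left, ← hT, hTy, inner_zero_left, zero_add]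

theorem mul_norm_sq_starProjection_le_re_inner_map_self {lam : ℝ}
    (hlam : lam ∈ lowerBounds (nonzeroRealEigenvalues T)) (x : E) :
    lam * ‖(LinearMap.ker T)ᗮ.starProjection x‖ ^ 2 ≤ re ⟪x, T x⟫_𝕜 := by
  rw [hT.inner_map_self_eq_inner_map_starProjection]
  exact hT.mul_norm_sq_le_re_inner_map_self_of_mem_ker_orthogonal hlam
    (Submodule.starProjection_apply_mem _ x)

theorem re_inner_map_self_le_opNorm_mul_norm_sq_starProjection (x : E) :
    re ⟪x, T x⟫_𝕜 ≤
      ‖LinearMap.toContinuousLinearMap T‖ * ‖(LinearMap.ker T)ᗮ.starProjection x‖ ^ 2 := by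
  set y := (LinearMap.ker T)ᗮ.starProjection x
  calc re ⟪x, T x⟫_𝕜 = re ⟪y, LinearMap.toContinuousLinearMap T y⟫_𝕜 := by
        rw [hT.inner_map_self_eq_inner_map_starProjection]; rfl
    _ ≤ ‖y‖ * ‖LinearMap.toContinuousLinearMap T y‖ := re_inner_le_norm _ _
    _ ≤ ‖y‖ * (‖LinearMap.toContinuousLinearMap T‖ * ‖y‖) := by
        gcongr; exact ContinuousLinearMap.le_opNorm _ _
    _ = _ := by ring

end LinearMap.IsSymmetric

theorem LinearMap.IsPositive.apply_eq_zero_of_re_inner_eq_zero {T : E →ₗ[𝕜] E}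
    (hT : T.IsPositive) {x : E} (hx : re ⟪x, T x⟫_𝕜 = 0) : T x = 0 := by
  rw [hT.isSymmetric.re_inner_map_self_eq_sum_eigenvalues rfl,
    Finset.sum_eq_zero_iff_of_nonneg fun i _ => mul_nonneg (hT.nonneg_eigenvalues rfl i)
      (sq_nonneg _)] at hx
  refine (hT.isSymmetric.eigenvectorBasis rfl).repr.injective (PiLp.ext fun i => ?_)
  rw [hT.isSymmetric.eigenvectorBasis_apply_self_apply rfl, map_zero]
  simpa using hx i (Finset.mem_univ i)

theorem LinearMap.IsPositive.ker_add {S T : E →ₗ[𝕜] E} (hS : S.IsPositive) (hT : T.IsPositive) :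
    LinearMap.ker (S + T) = LinearMap.ker S ⊓ LinearMap.ker T := by
  refine le_antisymm (fun x hx => ?_) fun x ⟨hxS, hxT⟩ => by
    simp_all only [SetLike.mem_coe, LinearMap.mem_ker, LinearMap.add_apply, add_zero]
  have hsum : re ⟪x, S x⟫_𝕜 + re ⟪x, T x⟫_𝕜 = 0 := by
    rw [← map_add, ← inner_add_right, ← LinearMap.add_apply, LinearMap.mem_ker.mp hx,
      inner_zero_right, map_zero]
  have hS0 := hS.re_inner_nonneg_right x
  have hT0 := hT.re_inner_nonneg_right x
  exact ⟨hS.apply_eq_zero_of_re_inner_eq_zero (by linarith),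
    hT.apply_eq_zero_of_re_inner_eq_zero (by linarith)⟩

variable {T₁ T₂ : E →ₗ[𝕜] E}

theorem mul_one_sub_mul_norm_sq_le_re_inner_add (h₁ : T₁.IsSymmetric) (h₂ : T₂.IsSymmetric)
    {μ c : ℝ} (hμ : 0 ≤ μ) (hμ₁ : μ ∈ lowerBounds (nonzeroRealEigenvalues T₁))
    (hμ₂ : μ ∈ lowerBounds (nonzeroRealEigenvalues T₂)) (hc : 0 ≤ c)
    (hangle : ∀ u ∈ LinearMap.ker T₁, ∀ v ∈ LinearMap.ker T₂,
      v ∈ (LinearMap.ker T₁ ⊓ LinearMap.ker T₂)ᗮ → ‖⟪u, v⟫_𝕜‖ ≤ c * ‖u‖ * ‖v‖)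
    {f : E} (hf : f ∈ (LinearMap.ker T₁ ⊓ LinearMap.ker T₂)ᗮ) :
    μ * (1 - c) * ‖f‖ ^ 2 ≤ re ⟪f, (T₁ + T₂) f⟫_𝕜 := by
  have e₁ := h₁.mul_norm_sq_starProjection_le_re_inner_map_self hμ₁ f
  have e₂ := h₂.mul_norm_sq_starProjection_le_re_inner_map_self hμ₂ f
  have p₁ := (LinearMap.ker T₁).norm_sq_eq_add_norm_sq_starProjection f
  have p₂ := (LinearMap.ker T₂).norm_sq_eq_add_norm_sq_starProjection f
  have hproj := norm_sq_starProjection_add_norm_sq_starProjection_le hc hangle hf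
  rw [LinearMap.add_apply, inner_add_right, map_add]
  nlinarith [mul_le_mul_of_nonneg_left hproj hμ]

theorem mul_one_sub_le_of_mem_nonzeroRealEigenvalues_add (h₁ : T₁.IsSymmetric)
    (h₂ : T₂.IsSymmetric) {μ c : ℝ} (hμ : 0 ≤ μ)
    (hμ₁ : μ ∈ lowerBounds (nonzeroRealEigenvalues T₁))
    (hμ₂ : μ ∈ lowerBounds (nonzeroRealEigenvalues T₂)) (hc : 0 ≤ c)
    (hangle : ∀ u ∈ LinearMap.ker T₁, ∀ v ∈ LinearMap.ker T₂,
      v ∈ (LinearMap.ker T₁ ⊓ LinearMap.ker T₂)ᗮ → ‖⟪u, v⟫_𝕜‖ ≤ c * ‖u‖ * ‖v‖)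
    {lam : ℝ} (hlam : lam ∈ nonzeroRealEigenvalues (T₁ + T₂)) : μ * (1 - c) ≤ lam := by
  obtain ⟨hlam0, f, hf0, hf⟩ := hlam
  have hker : LinearMap.ker T₁ ⊓ LinearMap.ker T₂ ≤ LinearMap.ker (T₁ + T₂) :=
    fun x ⟨hx₁, hx₂⟩ => by simp_all
  have hf_orth : f ∈ (LinearMap.ker T₁ ⊓ LinearMap.ker T₂)ᗮ :=
    Submodule.orthogonal_le hker <|
      (h₁.add h₂).mem_ker_orthogonal_of_apply_eq_smul (ofReal_ne_zero.mpr hlam0) hf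
  have hbound := mul_one_sub_mul_norm_sq_le_re_inner_add h₁ h₂ hμ hμ₁ hμ₂ hc hangle hf_orth
  rw [hf, inner_smul_right, inner_self_eq_norm_sq_to_K] at hbound
  norm_cast at hbound
  exact le_of_mul_le_mul_right hbound (by positivity)

theorem le_opNorm_mul_one_sub_norm_inner_sq (h₁ : T₁.IsPositive) (h₂ : T₂.IsPositive) {lam : ℝ}
    (hlam : lam ∈ lowerBounds (nonzeroRealEigenvalues (T₁ + T₂))) {u v : E}
    (hu : u ∈ LinearMap.ker T₁) (hv : v ∈ LinearMap.ker T₂)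
    (hv_orth : v ∈ (LinearMap.ker T₁ ⊓ LinearMap.ker T₂)ᗮ) (hu1 : ‖u‖ = 1) (hv1 : ‖v‖ = 1) :
    lam ≤ ‖LinearMap.toContinuousLinearMap T₁‖ * (1 - ‖⟪u, v⟫_𝕜‖ ^ 2) := by
  have hray := (h₁.isSymmetric.add h₂.isSymmetric)
    |>.mul_norm_sq_le_re_inner_map_self_of_mem_ker_orthogonal hlam (x := v)
      (by rwa [h₁.ker_add h₂])
  rw [hv1, one_pow, mul_one, LinearMap.add_apply, LinearMap.mem_ker.mp hv, add_zero] at hray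
  have hpy := (LinearMap.ker T₁).norm_sq_eq_add_norm_sq_starProjection v
  have hproj : ‖⟪u, v⟫_𝕜‖ ≤ ‖(LinearMap.ker T₁).starProjection v‖ :=
    calc ‖⟪u, v⟫_𝕜‖ = ‖⟪u, (LinearMap.ker T₁).starProjection v⟫_𝕜‖ := by
          rw [← Submodule.inner_starProjection_left_eq_right,
            Submodule.starProjection_eq_self_iff.mpr hu]
      _ ≤ ‖u‖ * ‖(LinearMap.ker T₁).starProjection v‖ := norm_inner_le_norm _ _
      _ = _ := by rw [hu1, one_mul]
  calc lam ≤ re ⟪v, T₁ v⟫_𝕜 := hray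
    _ ≤ ‖LinearMap.toContinuousLinearMap T₁‖ *
        ‖(LinearMap.ker T₁)ᗮ.starProjection v‖ ^ 2 :=
      h₁.isSymmetric.re_inner_map_self_le_opNorm_mul_norm_sq_starProjection v
    _ ≤ _ := by
      gcongr
      nlinarith [pow_le_pow_left₀ (norm_nonneg _) hproj 2]

end FiniteDimensional

theorem kitaev_angle_lemma_general {n : ℕ}
    (H1 H2 : Matrix (Fin n) (Fin n) ℂ)
    (h1 : H1.PosSemidef) (h2 : H2.PosSemidef)
    (N1 N2 : Submodule ℂ (EuclideanSpace ℂ (Fin n)))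
    (hN1 : N1 = LinearMap.ker (Matrix.toEuclideanLin H1))
    (hN2 : N2 = LinearMap.ker (Matrix.toEuclideanLin H2))
    (lam1 lam2 : ℝ)
    (hlam1 : IsLeast {μ : ℝ | μ ≠ 0 ∧ ∃ f : EuclideanSpace ℂ (Fin n), f ≠ 0 ∧
        Matrix.toEuclideanLin H1 f = (μ : ℂ) • f} lam1)
    (hlam2 : IsLeast {μ : ℝ | μ ≠ 0 ∧ ∃ f : EuclideanSpace ℂ (Fin n), f ≠ 0 ∧
        Matrix.toEuclideanLin H2 f = (μ : ℂ) • f} lam2)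
    (μ : ℝ) (hμ : μ = min lam1 lam2)
    (θ : ℝ)
    (hcos : IsGreatest {r : ℝ | ∃ u v : EuclideanSpace ℂ (Fin n),
        u ∈ N1 ∧ v ∈ N2 ∧ v ∈ (N1 ⊓ N2)ᗮ ∧ ‖u‖ = 1 ∧ ‖v‖ = 1 ∧
        r = ‖(⟪u, v⟫_ℂ : ℂ)‖} (Real.cos θ))
    (lamSum : ℝ)
    (hlamSum : IsLeast {ν : ℝ | ν ≠ 0 ∧ ∃ f : EuclideanSpace ℂ (Fin n), f ≠ 0 ∧
        Matrix.toEuclideanLin (H1 + H2) f = (ν : ℂ) • f} lamSum) :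
    μ * Real.sin (θ / 2) ^ 2 ≤ lamSum ∧
      lamSum ≤ ‖LinearMap.toContinuousLinearMap (Matrix.toEuclideanLin H1)‖ *
        Real.sin θ ^ 2 := by
  have hP₁ := Matrix.isPositive_toEuclideanLin_iff.mpr h1
  have hP₂ := Matrix.isPositive_toEuclideanLin_iff.mpr h2
  rw [map_add] at hlamSum
  set T₁ := Matrix.toEuclideanLin H1
  set T₂ := Matrix.toEuclideanLin H2
  subst hN1 hN2 hμ
  obtain ⟨u, v, hu, hv, hv_orth, hu1, hv1, hcos_eq⟩ := hcos.1
  have hangle : ∀ x ∈ LinearMap.ker T₁, ∀ y ∈ LinearMap.ker T₂,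
      y ∈ (LinearMap.ker T₁ ⊓ LinearMap.ker T₂)ᗮ → ‖⟪x, y⟫_ℂ‖ ≤ Real.cos θ * ‖x‖ * ‖y‖ :=
    fun _ hx _ hy hy_orth => norm_inner_le_mul_of_norm_eq_one
      (L := LinearMap.ker T₂ ⊓ (LinearMap.ker T₁ ⊓ LinearMap.ker T₂)ᗮ)
      (fun x hx y hy hx1 hy1 => hcos.2 ⟨x, y, hx, hy.1, hy.2, hx1, hy1, rfl⟩) hx ⟨hy, hy_orth⟩
  constructor
  · have hμ_nonneg : 0 ≤ min lam1 lam2 := le_min (hP₁.pos_of_mem_nonzeroRealEigenvalues hlam1.1).le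
      (hP₂.pos_of_mem_nonzeroRealEigenvalues hlam2.1).le
    have hlow := mul_one_sub_le_of_mem_nonzeroRealEigenvalues_add hP₁.isSymmetric
      hP₂.isSymmetric hμ_nonneg (fun _ hx => (min_le_left _ _).trans (hlam1.2 hx))
      (fun _ hx => (min_le_right _ _).trans (hlam2.2 hx)) (hcos_eq ▸ norm_nonneg _)
      hangle hlamSum.1
    have hhalf : 2 * Real.sin (θ / 2) ^ 2 = 1 - Real.cos θ := by
      rw [Real.sin_sq_eq_half_sub, mul_div_cancel₀ θ two_ne_zero]; ring
    nlinarith [sq_nonneg (Real.sin (θ / 2))]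
  · have hup := le_opNorm_mul_one_sub_norm_inner_sq hP₁ hP₂ hlamSum.2 hu hv hv_orth hu1 hv1
    rwa [← hcos_eq, ← Real.sin_sq] at hup

theorem kitaev_angle_lemma {n : ℕ}
    (H1 H2 : Matrix (Fin n) (Fin n) ℂ)
    (h1 : H1.PosSemidef) (h2 : H2.PosSemidef)
    (N1 N2 : Submodule ℂ (EuclideanSpace ℂ (Fin n)))
    (hN1 : N1 = LinearMap.ker (Matrix.toEuclideanLin H1))
    (hN2 : N2 = LinearMap.ker (Matrix.toEuclideanLin H2))
    (hN1ne : N1 ≠ ⊥) (hN2ne : N2 ≠ ⊥)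
    (hproper : N1 ⊓ N2 < N2)
    (lam1 lam2 : ℝ)
    (hlam1 : IsLeast {μ : ℝ | μ ≠ 0 ∧ ∃ f : EuclideanSpace ℂ (Fin n), f ≠ 0 ∧
        Matrix.toEuclideanLin H1 f = (μ : ℂ) • f} lam1)
    (hlam2 : IsLeast {μ : ℝ | μ ≠ 0 ∧ ∃ f : EuclideanSpace ℂ (Fin n), f ≠ 0 ∧
        Matrix.toEuclideanLin H2 f = (μ : ℂ) • f} lam2)
    (μ : ℝ) (hμ : μ = min lam1 lam2)
    (θ : ℝ) (hθ0 : 0 ≤ θ) (hθ1 : θ ≤ Real.pi / 2)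
    (hcos : IsGreatest {r : ℝ | ∃ u v : EuclideanSpace ℂ (Fin n),
        u ∈ N1 ∧ v ∈ N2 ∧ v ∈ (N1 ⊓ N2)ᗮ ∧ ‖u‖ = 1 ∧ ‖v‖ = 1 ∧
        r = ‖(⟪u, v⟫_ℂ : ℂ)‖} (Real.cos θ))
    (lamSum : ℝ)
    (hlamSum : IsLeast {ν : ℝ | ν ≠ 0 ∧ ∃ f : EuclideanSpace ℂ (Fin n), f ≠ 0 ∧
        Matrix.toEuclideanLin (H1 + H2) f = (ν : ℂ) • f} lamSum) :
    μ * Real.sin (θ / 2) ^ 2 ≤ lamSum ∧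
      lamSum ≤ ‖LinearMap.toContinuousLinearMap (Matrix.toEuclideanLin H1)‖ *
        Real.sin θ ^ 2 :=
  kitaev_angle_lemma_general H1 H2 h1 h2 N1 N2 hN1 hN2 lam1 lam2 hlam1 hlam2 μ hμ θ hcos lamSum
    hlamSum
end
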